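/- Let s ∈ (0,1) with s ≠ 1/2. Then H_s > γ_s, i.e., Γ(s+1/2)²/π > 2^{2s−1}·Γ(s+1/2)/(√π · Γ(1−s)). -/

import Mathlib

open MeasureTheory Real

noncomputable section

/-- The first coordinate `x₁` of a point in `ℝⁿ`. -/
def fc {n : ℕ} (x : EuclideanSpace ℝ (Fin n)) : ℝ :=
  if h : 0 < n then x ⟨0, h⟩ else 0

/-- The open half-space `ℝⁿ₊ = {x : x₁ > 0}`. -/
def halfSpace (n : ℕ) : Set (EuclideanSpace ℝ (Fin n)) := {x | 0 < fc x}

/-- The normalizing constant `C_{n,s}`. -/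
def Cns (n : ℕ) (s : ℝ) : ℝ :=
  s * (2:ℝ) ^ (2*s) * Real.Gamma ((n:ℝ)/2 + s) / (Real.pi ^ ((n:ℝ)/2) * Real.Gamma (1-s))

/-- The sharp fractional Hardy constant `H_s = Γ(s+1/2)²/π`. -/
def Hconst (s : ℝ) : ℝ := Real.Gamma (s + 1/2) ^ 2 / Real.pi

/-- The Gagliardo quadratic form `Q_s(u)`. -/
def Qform (n : ℕ) (s : ℝ) (u : EuclideanSpace ℝ (Fin n) → ℝ) : ℝ :=
  (Cns n s / 2) * ∫ x : EuclideanSpace ℝ (Fin n), ∫ y : EuclideanSpace ℝ (Fin n),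
    (u x - u y)^2 / ‖x - y‖ ^ ((n:ℝ) + 2*s)

/-- The bilinear form `B_s(v,w)` associated with `Q_s`. -/
def Bform (n : ℕ) (s : ℝ) (v w : EuclideanSpace ℝ (Fin n) → ℝ) : ℝ :=
  (Cns n s / 2) * ∫ x : EuclideanSpace ℝ (Fin n), ∫ y : EuclideanSpace ℝ (Fin n),
    (v x - v y) * (w x - w y) / ‖x - y‖ ^ ((n:ℝ) + 2*s)

/-- Finiteness of the Gagliardo form, `Q_s(u) < ∞`. -/
def QformFinite (n : ℕ) (s : ℝ) (u : EuclideanSpace ℝ (Fin n) → ℝ) : Prop :=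
  (∫⁻ x : EuclideanSpace ℝ (Fin n), ∫⁻ y : EuclideanSpace ℝ (Fin n),
    ENNReal.ofReal ((u x - u y)^2 / ‖x - y‖ ^ ((n:ℝ) + 2*s))) < ⊤

/-- Membership in `𝒟̃^s(ℝⁿ₊)`: measurable, in `L^{2*_s}(ℝⁿ)`, finite Gagliardo form,
vanishing a.e. on `{x₁ ≤ 0}`. -/
def memDs (n : ℕ) (s : ℝ) (u : EuclideanSpace ℝ (Fin n) → ℝ) : Prop :=
  Measurable u ∧ MemLp u (ENNReal.ofReal (2*(n:ℝ)/((n:ℝ)-2*s))) volume ∧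
  QformFinite n s u ∧ (∀ᵐ x : EuclideanSpace ℝ (Fin n), fc x ≤ 0 → u x = 0)

/-- The Hardy term `∫_{ℝⁿ₊} x₁^{-2s} u² dx`. -/
def hardyInt (n : ℕ) (s : ℝ) (u : EuclideanSpace ℝ (Fin n) → ℝ) : ℝ :=
  ∫ x in halfSpace n, fc x ^ (-(2*s)) * (u x)^2

/-- The fractional Sobolev constant `S_s` on `ℝⁿ`. -/
def sobolevS (n : ℕ) (s : ℝ) : ℝ :=
  sInf { r | ∃ u : EuclideanSpace ℝ (Fin n) → ℝ, Measurable u ∧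
    MemLp u (ENNReal.ofReal (2*(n:ℝ)/((n:ℝ)-2*s))) volume ∧ QformFinite n s u ∧ u ≠ 0 ∧
    r = Qform n s u /
      (∫ x : EuclideanSpace ℝ (Fin n), |u x| ^ (2*(n:ℝ)/((n:ℝ)-2*s))) ^ (((n:ℝ)-2*s)/(n:ℝ)) }

/-- The best Hardy–Sobolev constant `S_s^{λ,p}(ℝⁿ₊)` with weight `x₁^{-pb}`. -/
def SsLam (n : ℕ) (s lam p b : ℝ) : ℝ :=
  sInf { r | ∃ u, memDs n s u ∧ u ≠ 0 ∧
    r = (Qform n s u - lam * hardyInt n s u) /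
        (∫ x in halfSpace n, fc x ^ (-(p*b)) * |u x| ^ p) ^ (2/p) }

/-- The best critical Hardy–Sobolev constant `S_s^{λ,2*_s}(ℝⁿ₊)`. -/
def SsCrit (n : ℕ) (s lam : ℝ) : ℝ :=
  sInf { r | ∃ u, memDs n s u ∧ u ≠ 0 ∧
    r = (Qform n s u - lam * hardyInt n s u) /
        (∫ x in halfSpace n, |u x| ^ (2*(n:ℝ)/((n:ℝ)-2*s))) ^ (((n:ℝ)-2*s)/(n:ℝ)) }

/-!
Cancelling one factor `Γ(s + 1/2)`, the claim is `2^{2s-1} √π < Γ(s + 1/2) Γ(1 - s)`. Legendre's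
duplication formula at `1 - s` rewrites `2^{2s-1} √π` as `Γ(1 - s) Γ(3/2 - s) / Γ(2 - 2s)`, so it
remains to show `Γ(1) Γ(3/2 - s) < Γ(s + 1/2) Γ(2 - 2s)`. Both pairs of arguments have the same
sum, and for `s ≠ 1/2` the pair `{1, 3/2 - s}` lies strictly between `s + 1/2` and `2 - 2s`; this
is exactly the situation where strict log-convexity of `Γ` gives a strict inequality.
-/

theorem StrictConvexOn.map_add_map_lt_of_mem_Ioo {𝕜 : Type*} [Field 𝕜] [LinearOrder 𝕜]
    [IsStrictOrderedRing 𝕜] {s : Set 𝕜} {f : 𝕜 → 𝕜} (hf : StrictConvexOn 𝕜 s f) {a b c d : 𝕜}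
    (ha : a ∈ s) (hd : d ∈ s) (hb : b ∈ Set.Ioo a d) (hsum : b + c = a + d) :
    f b + f c < f a + f d := by
  obtain rfl : c = a + d - b := by linarith
  have had : 0 < d - a := by linarith [hb.1, hb.2]
  have hl : 0 < (d - b) / (d - a) := div_pos (by linarith [hb.2]) had
  have hm : 0 < (b - a) / (d - a) := div_pos (by linarith [hb.1]) had
  have hlm : (d - b) / (d - a) + (b - a) / (d - a) = 1 := by field_simp; ring
  -- `b` and `c` are the convex combinations of `a` and `d` with the same two weights, swapped.
  have hfb := hf.2 ha hd (sub_pos.mp had).ne hl hm hlm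
  have hfc := hf.2 ha hd (sub_pos.mp had).ne hm hl (by linarith)
  simp only [smul_eq_mul] at hfb hfc
  rw [show (d - b) / (d - a) * a + (b - a) / (d - a) * d = b by field_simp; ring] at hfb
  rw [show (b - a) / (d - a) * a + (d - b) / (d - a) * d = a + d - b by field_simp; ring] at hfc
  linear_combination hfb + hfc + (f a + f d) * hlm

namespace Real

open Set

/-- `log Γ x = log Γ (x + 1) - log x` is a convex function minus a strictly concave one. -/
theorem strictConvexOn_log_Gamma : StrictConvexOn ℝ (Ioi 0) (log ∘ Gamma) := by
  have hshift : ConvexOn ℝ (Ioi 0) (fun x => log (Gamma (x + 1))) := by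
    refine ((convexOn_log_Gamma.translate_right 1).subset (fun x (hx : 0 < x) => ?_)
      (convex_Ioi 0)).congr fun x _ => by simp [add_comm]
    show (0 : ℝ) < 1 + x
    linarith
  refine (hshift.sub_strictConcaveOn strictConcaveOn_log_Ioi).congr fun x (hx : 0 < x) => ?_
  simp only [Pi.sub_apply, Function.comp_apply, Gamma_add_one hx.ne']
  rw [log_mul hx.ne' (Gamma_pos_of_pos hx).ne']
  ring

theorem Gamma_mul_Gamma_lt_of_mem_Ioo {a b c d : ℝ} (ha : 0 < a)
    (hb : b ∈ Ioo a d) (hsum : b + c = a + d) :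
    Gamma b * Gamma c < Gamma a * Gamma d := by
  have hd : 0 < d := ha.trans (hb.1.trans hb.2)
  have hΓb := Gamma_pos_of_pos (ha.trans hb.1)
  have hΓc := Gamma_pos_of_pos (show 0 < c by linarith [hb.2])
  have hΓa := Gamma_pos_of_pos ha
  have hΓd := Gamma_pos_of_pos hd
  have hlog := strictConvexOn_log_Gamma.map_add_map_lt_of_mem_Ioo ha hd hb hsum
  simp only [Function.comp_apply] at hlog
  rwa [← log_mul hΓb.ne' hΓc.ne', ← log_mul hΓa.ne' hΓd.ne',
    log_lt_log_iff (by positivity) (by positivity)] at hlog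

theorem Gamma_three_halves_sub_lt {s : ℝ} (hs0 : 0 < s) (hs1 : s < 1) (hne : s ≠ 1 / 2) :
    Gamma (3 / 2 - s) < Gamma (s + 1 / 2) * Gamma (2 - 2 * s) := by
  rcases hne.lt_or_gt with hlt | hgt
  · simpa using Gamma_mul_Gamma_lt_of_mem_Ioo (b := 1) (c := 3 / 2 - s) (d := 2 - 2 * s)
      (by linarith) ⟨by linarith, by linarith⟩ (by ring)
  · simpa [mul_comm] using Gamma_mul_Gamma_lt_of_mem_Ioo (b := 1) (c := 3 / 2 - s)
      (d := s + 1 / 2) (by linarith) ⟨by linarith, by linarith⟩ (by ring)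

theorem two_rpow_mul_sqrt_pi_lt_Gamma_mul_Gamma {s : ℝ} (hs0 : 0 < s) (hs1 : s < 1)
    (hne : s ≠ 1 / 2) :
    2 ^ (2 * s - 1) * √π < Gamma (s + 1 / 2) * Gamma (1 - s) := by
  have hdup : Gamma (1 - s) * Gamma (3 / 2 - s) = Gamma (2 - 2 * s) * 2 ^ (2 * s - 1) * √π := by
    convert Gamma_mul_Gamma_add_half (1 - s) using 3 <;> ring_nf
  have hG : 0 < Gamma (2 - 2 * s) := Gamma_pos_of_pos (by linarith)
  have hG' : 0 < Gamma (1 - s) := Gamma_pos_of_pos (by linarith)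
  refine lt_of_mul_lt_mul_left ?_ hG.le
  calc Gamma (2 - 2 * s) * (2 ^ (2 * s - 1) * √π)
      = Gamma (1 - s) * Gamma (3 / 2 - s) := by rw [hdup]; ring
    _ < Gamma (1 - s) * (Gamma (s + 1 / 2) * Gamma (2 - 2 * s)) :=
        mul_lt_mul_of_pos_left (Gamma_three_halves_sub_lt hs0 hs1 hne) hG'
    _ = Gamma (2 - 2 * s) * (Gamma (s + 1 / 2) * Gamma (1 - s)) := by ring

end Real

/-- for `s ∈ (0,1)`, `s ≠ 1/2`, one has `H_s > γ_s`, i.e.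
`Γ(s+1/2)²/π > 2^{2s-1}·Γ(s+1/2)/(√π·Γ(1-s))`. -/
theorem Hconst_gt_gamma (s : ℝ) (hs0 : 0 < s) (hs1 : s < 1) (hne : s ≠ 1/2) :
    Real.Gamma (s + 1/2) ^ 2 / Real.pi >
      (2:ℝ) ^ (2*s-1) * Real.Gamma (s + 1/2) / (Real.sqrt Real.pi * Real.Gamma (1-s)) := by
  have hG : 0 < Gamma (s + 1/2) := Gamma_pos_of_pos (by linarith)
  have hG' : 0 < Gamma (1 - s) := Gamma_pos_of_pos (by linarith)
  rw [gt_iff_lt, div_lt_div_iff₀ (by positivity) pi_pos]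
  calc 2 ^ (2*s-1) * Gamma (s + 1/2) * π
      = Gamma (s + 1/2) * √π * (2 ^ (2*s-1) * √π) := by
        linear_combination -(2 ^ (2*s-1) * Gamma (s + 1/2)) * mul_self_sqrt pi_pos.le
    _ < Gamma (s + 1/2) * √π * (Gamma (s + 1/2) * Gamma (1 - s)) :=
        mul_lt_mul_of_pos_left (two_rpow_mul_sqrt_pi_lt_Gamma_mul_Gamma hs0 hs1 hne)
          (by positivity)
    _ = Gamma (s + 1/2) ^ 2 * (√π * Gamma (1 - s)) := by ring
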